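/- Let m ≥ 3 be an integer, set a_m = (1/m^{3/2} − 1/(m+1)^{3/2})², and define υ_m(t) = sin(m·t)/m² − sin((m+1)·t)/(m+1)² − a_m·sin(t) for real t. Then there exists a real number t₁ with 2π/(2m+1) < t₁ < 3π/(2m) such that υ_m(t₁) = 0, υ_m(t) > 0 for all t with 0 < t < t₁, and υ_m(t) < 0 for all t with t₁ < t ≤ 2π/(m+1). -/

import Mathlib

/-
Write `M` for `m` and `a` for the coefficient of `sin t`. Since `a ≤ 9 / (4 M⁴ (M+1))`, it only
matters as a perturbation of `M²(M+1)² υ(t) = (M+1)² sin(Mt) − M² sin((M+1)t) − a M²(M+1)² sin t`.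
On `(0, 2π/(2M+1)]` the main part is at least `(2M+1)t/π` (Jordan's inequality `sin x ≥ 2x/π`,
applied to `Mt` or to `π − Mt`), which beats the `a`-term. On `[3π/(2M), 2π/(M+1)]` both `Mt` and
`(M+1)t` lie in `[3π/2, 2π]`, where `sin` is negative and increasing, so `υ < 0`. In between,
`M(M+1) υ'(t) = (M+1) cos(Mt) − M cos((M+1)t) − a M(M+1) cos t < 0`, so `υ` is strictly
decreasing there and the intermediate value theorem produces the zero `t₁`.
-/

open Real

/-- The function υ_m of Lemma 6.4. -/
noncomputable def upsilon (m : ℕ) (t : ℝ) : ℝ :=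
  Real.sin (m * t) / (m : ℝ) ^ 2 - Real.sin (((m : ℝ) + 1) * t) / ((m : ℝ) + 1) ^ 2
    - (1 / (m : ℝ) ^ ((3 : ℝ) / 2) - 1 / ((m : ℝ) + 1) ^ ((3 : ℝ) / 2)) ^ 2 * Real.sin t

open Set

noncomputable def upsilonCoeff (M : ℝ) : ℝ :=
  (1 / M ^ ((3 : ℝ) / 2) - 1 / (M + 1) ^ ((3 : ℝ) / 2)) ^ 2

noncomputable def upsilonWith (M a t : ℝ) : ℝ :=
  sin (M * t) / M ^ 2 - sin ((M + 1) * t) / (M + 1) ^ 2 - a * sin t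

theorem upsilon_eq_upsilonWith (m : ℕ) : upsilon m = upsilonWith m (upsilonCoeff m) := rfl

theorem rpow_three_halves {x : ℝ} (hx : 0 ≤ x) : x ^ ((3 : ℝ) / 2) = √x ^ 3 := by
  rw [sqrt_eq_rpow, ← rpow_natCast, ← rpow_mul hx]
  norm_num

theorem upsilonCoeff_le {M : ℝ} (hM : 0 < M) : upsilonCoeff M ≤ 9 / (4 * M ^ 4 * (M + 1)) := by
  obtain ⟨s, hs, rfl⟩ : ∃ s, 0 < s ∧ s ^ 2 = M := ⟨√M, by positivity, sq_sqrt hM.le⟩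
  obtain ⟨r, hr, hrs⟩ : ∃ r, 0 < r ∧ r ^ 2 = s ^ 2 + 1 :=
    ⟨√(s ^ 2 + 1), by positivity, sq_sqrt (by positivity)⟩
  have hsr : s < r := by nlinarith
  have hdiff : 0 ≤ 1 / s ^ 3 - 1 / r ^ 3 := by
    rw [sub_nonneg]; gcongr
  have hdiff_le : 1 / s ^ 3 - 1 / r ^ 3 ≤ 3 / (2 * s ^ 4 * r) := by
    have hcubic : 2 * s * (r ^ 2 + r * s + s ^ 2) ≤ 3 * r ^ 2 * (r + s) := by
      nlinarith [mul_pos hs hr, mul_pos (sub_pos.2 hsr) (mul_pos hr hr)]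
    have key : 2 * s * (r ^ 3 - s ^ 3) ≤ 3 * r ^ 2 := by
      have := mul_le_mul_of_nonneg_left hcubic (sub_pos.2 hsr).le
      nlinarith
    rw [div_sub_div _ _ (by positivity) (by positivity),
      div_le_div_iff₀ (by positivity) (by positivity)]
    nlinarith [mul_le_mul_of_nonneg_left key (by positivity : (0 : ℝ) ≤ s ^ 3 * r)]
  calc upsilonCoeff (s ^ 2) = (1 / s ^ 3 - 1 / r ^ 3) ^ 2 := by
        rw [upsilonCoeff, rpow_three_halves (by positivity), ← hrs,
          rpow_three_halves (by positivity), sqrt_sq hs.le, sqrt_sq hr.le]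
    _ ≤ (3 / (2 * s ^ 4 * r)) ^ 2 := by gcongr
    _ = 9 / (4 * (s ^ 2) ^ 4 * (s ^ 2 + 1)) := by rw [← hrs]; field_simp; ring

theorem sq_mul_sin_sub_sq_mul_sin_eq (M t : ℝ) :
    (M + 1) ^ 2 * sin (M * t) - M ^ 2 * sin ((M + 1) * t)
      = sin (M * t) * ((M + 1) ^ 2 - M ^ 2 * cos t) - M ^ 2 * cos (M * t) * sin t := by
  rw [add_mul, one_mul, sin_add]; ring

theorem le_pi_mul_sq_mul_sin_sub_of_le_pi_div_two {M t : ℝ} (hM : 2 ≤ M) (ht : 0 ≤ t)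
    (hMt : M * t ≤ π / 2) :
    (2 * M + 1) * t ≤ π * ((M + 1) ^ 2 * sin (M * t) - M ^ 2 * sin ((M + 1) * t)) := by
  have hMt0 : 0 ≤ M * t := by positivity
  have hjordan : 2 / π * (M * t) ≤ sin (M * t) := mul_le_sin hMt0 hMt
  have hcos : 0 ≤ cos (M * t) := cos_nonneg_of_mem_Icc ⟨by linarith [pi_pos], hMt⟩
  have hcos_sin : cos (M * t) * sin t ≤ t := by
    nlinarith [sin_le ht, cos_le_one (M * t)]
  have hfactor : 2 * M + 1 ≤ (M + 1) ^ 2 - M ^ 2 * cos t := by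
    nlinarith [cos_le_one t]
  have hsin : 0 ≤ sin (M * t) := le_trans (by positivity) hjordan
  rw [sq_mul_sin_sub_sq_mul_sin_eq]
  have h1 : 2 * (M * t) * (2 * M + 1) ≤ π * (sin (M * t) * ((M + 1) ^ 2 - M ^ 2 * cos t)) := by
    have := mul_le_mul hjordan hfactor (by positivity) hsin
    rw [div_mul_eq_mul_div, div_mul_eq_mul_div, div_le_iff₀ pi_pos] at this
    linarith
  have h2 := mul_le_mul_of_nonneg_left hcos_sin (mul_nonneg pi_pos.le (sq_nonneg M))
  have h3 : 0 ≤ t * ((4 - π) * M ^ 2 - 1) := by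
    refine mul_nonneg ht ?_
    nlinarith [pi_lt_d2, mul_le_mul_of_nonneg_left (by nlinarith : (4 : ℝ) ≤ M ^ 2)
      (by linarith [pi_lt_four] : (0 : ℝ) ≤ 4 - π)]
  linarith

theorem le_pi_mul_sq_mul_sin_sub_of_pi_div_two_le {M t : ℝ} (hM : 1 ≤ M) (ht : 0 ≤ t)
    (hMt : π / 2 ≤ M * t) (ht' : (2 * M + 1) * t ≤ 2 * π) :
    (2 * M + 1) * t ≤ π * ((M + 1) ^ 2 * sin (M * t) - M ^ 2 * sin ((M + 1) * t)) := by
  set w := π - M * t with hw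
  have hw_lower : π ≤ (2 * M + 1) * w := by nlinarith
  have hw_upper : w ≤ π / 2 := by linarith
  have hw0 : 0 ≤ w := by nlinarith [pi_pos]
  have hsin : sin (M * t) = sin w := by rw [hw, sin_pi_sub]
  have hjordan : 2 / π * w ≤ sin w := mul_le_sin hw0 hw_upper
  have hsin_lower : 2 ≤ (2 * M + 1) * sin (M * t) := by
    rw [div_mul_eq_mul_div, div_le_iff₀ pi_pos] at hjordan
    rw [hsin]; nlinarith [pi_pos]
  have hcos : cos (M * t) ≤ 0 := cos_nonpos_of_pi_div_two_le_of_le hMt (by linarith [pi_pos])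
  have hsin_t : 0 ≤ sin t := sin_nonneg_of_nonneg_of_le_pi ht (by nlinarith [pi_pos])
  have hfactor : 2 * M + 1 ≤ (M + 1) ^ 2 - M ^ 2 * cos t := by
    nlinarith [cos_le_one t]
  have hsin_nonneg : 0 ≤ sin (M * t) :=
    hsin ▸ sin_nonneg_of_nonneg_of_le_pi hw0 (by linarith [pi_pos])
  have hN : 2 ≤ sin (M * t) * ((M + 1) ^ 2 - M ^ 2 * cos t) - M ^ 2 * cos (M * t) * sin t := by
    nlinarith [mul_le_mul_of_nonneg_left hfactor hsin_nonneg,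
      mul_nonpos_of_nonpos_of_nonneg hcos hsin_t]
  rw [sq_mul_sin_sub_sq_mul_sin_eq]
  nlinarith [mul_le_mul_of_nonneg_left hN pi_pos.le]

theorem upsilonWith_pos {M a t : ℝ} (hM : 3 ≤ M) (ha : a ≤ 9 / (4 * M ^ 4 * (M + 1)))
    (ht : 0 < t) (ht' : (2 * M + 1) * t ≤ 2 * π) : 0 < upsilonWith M a t := by
  have hN : (2 * M + 1) * t ≤ π * ((M + 1) ^ 2 * sin (M * t) - M ^ 2 * sin ((M + 1) * t)) := by
    rcases le_total (M * t) (π / 2) with hMt | hMt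
    · exact le_pi_mul_sq_mul_sin_sub_of_le_pi_div_two (by linarith) ht.le hMt
    · exact le_pi_mul_sq_mul_sin_sub_of_pi_div_two_le (by linarith) ht.le hMt ht'
  have hsin_t : 0 ≤ sin t := sin_nonneg_of_nonneg_of_le_pi ht.le (by nlinarith [pi_pos])
  have ha_sin : a * sin t * (4 * M ^ 4 * (M + 1)) ≤ 9 * t := by
    rw [le_div_iff₀ (by positivity)] at ha
    nlinarith [sin_le ht.le]
  have hM0 : 0 < M := by linarith
  have hnum : 9 * π * (M + 1) < 4 * M ^ 2 * (2 * M + 1) := by nlinarith [pi_lt_four]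
  have key : 0 < (M + 1) ^ 2 * sin (M * t) - M ^ 2 * sin ((M + 1) * t)
      - a * sin t * (M ^ 2 * (M + 1) ^ 2) := by
    refine pos_of_mul_pos_right (a := π * (4 * M ^ 2)) ?_ (by positivity)
    have h1 := mul_le_mul_of_nonneg_left hN (by positivity : (0 : ℝ) ≤ 4 * M ^ 2)
    have h2 := mul_le_mul_of_nonneg_left ha_sin (by positivity : (0 : ℝ) ≤ π * (M + 1))
    linarith [mul_lt_mul_of_pos_right hnum ht]
  have : upsilonWith M a t = ((M + 1) ^ 2 * sin (M * t) - M ^ 2 * sin ((M + 1) * t)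
      - a * sin t * (M ^ 2 * (M + 1) ^ 2)) / (M ^ 2 * (M + 1) ^ 2) := by
    rw [upsilonWith]; field_simp
  rw [this]; positivity

theorem upsilonWith_neg {M a t : ℝ} (hM : 1 ≤ M) (ha : 0 ≤ a) (hMt : 3 * π / 2 ≤ M * t)
    (ht : (M + 1) * t ≤ 2 * π) : upsilonWith M a t < 0 := by
  have ht0 : 0 < t := by nlinarith [pi_pos]
  set u := 2 * π - M * t with hu
  have hsin_u : sin (M * t) = -sin u := by rw [hu, sin_two_pi_sub, neg_neg]
  have hsin_v : sin ((M + 1) * t) = -sin (u - t) := by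
    rw [show u - t = 2 * π - (M + 1) * t by rw [hu]; ring, sin_two_pi_sub, neg_neg]
  have hsin_pos : 0 < sin u := sin_pos_of_pos_of_lt_pi (by linarith) (by linarith)
  have hsin_le : sin (u - t) ≤ sin u :=
    sin_le_sin_of_le_of_le_pi_div_two (by linarith) (by linarith) (by linarith)
  have hsin_t : 0 ≤ sin t := sin_nonneg_of_nonneg_of_le_pi ht0.le (by nlinarith [pi_pos])
  have hsq : M ^ 2 < (M + 1) ^ 2 := by nlinarith
  rw [upsilonWith, hsin_u, hsin_v]
  have : sin (u - t) / (M + 1) ^ 2 < sin u / M ^ 2 :=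
    (div_le_div_of_nonneg_right hsin_le (by positivity)).trans_lt
      (div_lt_div_of_pos_left hsin_pos (by positivity) hsq)
  rw [neg_div, neg_div]
  linarith [mul_nonneg ha hsin_t]

theorem hasDerivAt_upsilonWith {M : ℝ} (hM : M ≠ 0) (hM' : M + 1 ≠ 0) (a t : ℝ) :
    HasDerivAt (upsilonWith M a)
      (cos (M * t) / M - cos ((M + 1) * t) / (M + 1) - a * cos t) t := by
  have hsin (c : ℝ) : HasDerivAt (fun t ↦ sin (c * t)) (cos (c * t) * c) t := by
    simpa [mul_comm] using ((hasDerivAt_id t).const_mul c).sin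
  exact ((((hsin M).div_const (M ^ 2)).sub ((hsin (M + 1)).div_const ((M + 1) ^ 2))).sub
    ((hasDerivAt_sin t).const_mul a)).congr_deriv (by field_simp)

theorem mul_cos_sub_mul_cos_eq (M t : ℝ) :
    (M + 1) * cos (M * t) - M * cos ((M + 1) * t)
      = cos (M * t) * ((M + 1) - M * cos t) + M * sin (M * t) * sin t := by
  rw [show (M + 1) * t = M * t + t by ring, cos_add]; ring

theorem mul_cos_sub_mul_cos_neg_of_le_pi {M t : ℝ} (hM : 2 ≤ M) (ht : 2 * π ≤ (2 * M + 1) * t)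
    (hMt : M * t ≤ π) : (M + 1) * cos (M * t) - M * cos ((M + 1) * t) < 0 := by
  set s := π - M * t with hs
  have hs0 : 0 ≤ s := by linarith
  have hs_le : (2 * M + 1) * s ≤ π := by nlinarith
  have hcos_s : 0 < cos s := cos_pos_of_mem_Ioo ⟨by linarith [pi_pos], by nlinarith [pi_pos]⟩
  have hsin_s : 0 ≤ sin s := sin_nonneg_of_nonneg_of_le_pi hs0 (by nlinarith [pi_pos])
  have htan : M * sin s ^ 2 < 2 * cos s ^ 2 := by
    have hsq : ((2 * M + 1) * s) ^ 2 ≤ π ^ 2 := pow_le_pow_left₀ (by positivity) hs_le 2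
    have hsin_sq : sin s ^ 2 ≤ s ^ 2 := pow_le_pow_left₀ hsin_s (sin_le hs0) 2
    have hπ : π ^ 2 < 9.93 := by nlinarith [pi_lt_d2, pi_pos]
    have : (M + 2) * s ^ 2 < 2 := by
      by_contra! h
      nlinarith [mul_le_mul_of_nonneg_left h (sq_nonneg (2 * M + 1))]
    nlinarith [sin_sq_add_cos_sq s]
  have hsin_t : sin t ^ 2 ≤ 2 * (1 - cos t) := by
    nlinarith [sin_sq_add_cos_sq t, cos_le_one t, neg_one_le_cos t]
  have hcos_Mt : cos (M * t) = -cos s := by rw [hs, cos_pi_sub, neg_neg]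
  have hsin_Mt : sin (M * t) = sin s := by rw [hs, sin_pi_sub]
  rw [mul_cos_sub_mul_cos_eq, hcos_Mt, hsin_Mt]
  -- AM-GM: `2 cos s sin s sin t ≤ cos² s sin² t + sin² s`, then `htan` and `hsin_t`
  have key : cos s * (M * sin s * sin t) < cos s * (cos s * ((M + 1) - M * cos t)) := by
    nlinarith [mul_nonneg (by linarith : (0 : ℝ) ≤ M) (sq_nonneg (cos s * sin t - sin s)),
      mul_le_mul_of_nonneg_left hsin_t (by positivity : (0 : ℝ) ≤ M * cos s ^ 2)]
  nlinarith [lt_of_mul_lt_mul_left key hcos_s.le]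

theorem mul_cos_sub_mul_cos_neg_of_pi_lt {M t : ℝ} (hM : 0 < M) (ht : 0 < t) (ht' : t < π)
    (hMt : π < M * t) (hMt' : M * t ≤ 3 * π / 2) :
    (M + 1) * cos (M * t) - M * cos ((M + 1) * t) < 0 := by
  have hcos : cos (M * t) ≤ 0 :=
    cos_nonpos_of_pi_div_two_le_of_le (by linarith [pi_pos]) (by linarith)
  have hsin : sin (M * t) < 0 := by
    rw [← neg_pos, ← sin_sub_pi]; exact sin_pos_of_pos_of_lt_pi (by linarith) (by linarith)
  have hfactor : 0 ≤ (M + 1) - M * cos t := by nlinarith [cos_le_one t]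
  rw [mul_cos_sub_mul_cos_eq]
  nlinarith [mul_nonpos_of_nonpos_of_nonneg hcos hfactor,
    mul_pos hM (sin_pos_of_pos_of_lt_pi ht ht')]

theorem upsilonWith_deriv_neg {M a t : ℝ} (hM : 3 ≤ M) (ha : 0 ≤ a)
    (ht : 2 * π ≤ (2 * M + 1) * t) (hMt : M * t ≤ 3 * π / 2) :
    cos (M * t) / M - cos ((M + 1) * t) / (M + 1) - a * cos t < 0 := by
  have ht0 : 0 < t := by nlinarith [pi_pos]
  have ht_le : t ≤ π / 2 := by nlinarith [pi_pos]
  have hN : (M + 1) * cos (M * t) - M * cos ((M + 1) * t) < 0 := by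
    rcases le_or_gt (M * t) π with h | h
    · exact mul_cos_sub_mul_cos_neg_of_le_pi (by linarith) ht h
    · exact mul_cos_sub_mul_cos_neg_of_pi_lt (by linarith) ht0 (by linarith [pi_pos]) h hMt
  have : cos (M * t) / M - cos ((M + 1) * t) / (M + 1)
      = ((M + 1) * cos (M * t) - M * cos ((M + 1) * t)) / (M * (M + 1)) := by
    field_simp
  rw [this]
  have hcos_t : 0 ≤ cos t := cos_nonneg_of_mem_Icc ⟨by linarith [pi_pos], ht_le⟩
  have : ((M + 1) * cos (M * t) - M * cos ((M + 1) * t)) / (M * (M + 1)) < 0 :=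
    div_neg_of_neg_of_pos hN (by positivity)
  nlinarith [mul_nonneg ha hcos_t]

theorem exists_sign_change_of_strictAntiOn {f : ℝ → ℝ} {a b c d : ℝ} (hab : a < b)
    (hbc : b < c) (hcd : c ≤ d) (hf : ContinuousOn f (Icc b c)) (hanti : StrictAntiOn f (Icc b c))
    (hpos : ∀ t ∈ Ioc a b, 0 < f t) (hneg : ∀ t ∈ Icc c d, f t < 0) :
    ∃ t₁ ∈ Ioo b c, f t₁ = 0 ∧ (∀ t ∈ Ioo a t₁, 0 < f t) ∧ ∀ t ∈ Ioc t₁ d, f t < 0 := by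
  obtain ⟨t₁, ⟨hbt₁, ht₁c⟩, hzero⟩ := intermediate_value_Ioo' hbc.le hf
    ⟨hneg c ⟨le_rfl, hcd⟩, hpos b ⟨hab, le_rfl⟩⟩
  have ht₁ : t₁ ∈ Icc b c := ⟨hbt₁.le, ht₁c.le⟩
  refine ⟨t₁, ⟨hbt₁, ht₁c⟩, hzero, fun t ⟨hat, htt₁⟩ ↦ ?_, fun t ⟨ht₁t, htd⟩ ↦ ?_⟩
  · rcases le_or_gt t b with htb | hbt
    · exact hpos t ⟨hat, htb⟩
    · exact hzero ▸ hanti ⟨hbt.le, (htt₁.trans ht₁c).le⟩ ht₁ htt₁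
  · rcases le_or_gt t c with htc | hct
    · exact hzero ▸ hanti ht₁ ⟨(hbt₁.trans ht₁t).le, htc⟩ ht₁t
    · exact hneg t ⟨hct.le, htd⟩

theorem upsilonWith_sign {M a : ℝ} (hM : 3 ≤ M) (ha : 0 ≤ a)
    (ha' : a ≤ 9 / (4 * M ^ 4 * (M + 1))) :
    ∃ t₁ : ℝ, 2 * π / (2 * M + 1) < t₁ ∧ t₁ < 3 * π / (2 * M) ∧ upsilonWith M a t₁ = 0 ∧
      (∀ t : ℝ, 0 < t → t < t₁ → 0 < upsilonWith M a t) ∧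
      (∀ t : ℝ, t₁ < t → t ≤ 2 * π / (M + 1) → upsilonWith M a t < 0) := by
  have hM0 : 0 < M := by linarith
  have hderiv := hasDerivAt_upsilonWith hM0.ne' (by linarith : M + 1 ≠ 0) a
  have hcont : Continuous (upsilonWith M a) :=
    continuous_iff_continuousAt.2 fun t ↦ (hderiv t).continuousAt
  have hanti :
      StrictAntiOn (upsilonWith M a) (Icc (2 * π / (2 * M + 1)) (3 * π / (2 * M))) := by
    refine strictAntiOn_of_deriv_neg (convex_Icc _ _) hcont.continuousOn fun t ht ↦ ?_
    rw [interior_Icc, mem_Ioo, div_lt_iff₀ (by positivity), lt_div_iff₀ (by positivity)]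
      at ht
    rw [(hderiv t).deriv]
    exact upsilonWith_deriv_neg hM ha (by linarith) (by linarith)
  obtain ⟨t₁, ⟨hlo, hhi⟩, hzero, hpos, hneg⟩ := exists_sign_change_of_strictAntiOn
    (a := 0) (d := 2 * π / (M + 1)) (by positivity)
    (by rw [div_lt_div_iff₀ (by positivity) (by positivity)]; nlinarith [pi_pos])
    (by rw [div_le_div_iff₀ (by positivity) (by positivity)]; nlinarith [pi_pos])
    hcont.continuousOn hanti
    (fun t ⟨ht, ht'⟩ ↦ upsilonWith_pos hM ha' ht
      (by rwa [le_div_iff₀ (by positivity), mul_comm] at ht'))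
    (fun t ⟨ht, ht'⟩ ↦ by
      rw [div_le_iff₀ (by positivity)] at ht
      rw [le_div_iff₀ (by positivity)] at ht'
      exact upsilonWith_neg (by linarith) ha (by linarith) (by linarith))
  exact ⟨t₁, hlo, hhi, hzero, fun t h h' ↦ hpos t ⟨h, h'⟩, fun t h h' ↦ hneg t ⟨h, h'⟩⟩

/-- Lemma 6.4: for m ≥ 3 there is t₁ ∈ (2π/(2m+1), 3π/(2m)) with υ_m(t₁) = 0,
υ_m > 0 on (0,t₁) and υ_m < 0 on (t₁, 2π/(m+1)]. -/
theorem upsilon_sign (m : ℕ) (hm : 3 ≤ m) :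
    ∃ t₁ : ℝ, 2 * Real.pi / (2 * m + 1) < t₁ ∧ t₁ < 3 * Real.pi / (2 * m) ∧
      upsilon m t₁ = 0 ∧
      (∀ t : ℝ, 0 < t → t < t₁ → 0 < upsilon m t) ∧
      (∀ t : ℝ, t₁ < t → t ≤ 2 * Real.pi / (m + 1) → upsilon m t < 0) := by
  have hM : (3 : ℝ) ≤ m := by exact_mod_cast hm
  rw [upsilon_eq_upsilonWith]
  exact upsilonWith_sign hM (sq_nonneg _) (upsilonCoeff_le (by linarith))
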